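/- arXiv:2510.07798 — 3 statements merged into one kernel-verified Lean document; each statement's English description precedes it below -/
import Mathlib

section
/- Let σ and σ̂ be n×n complex positive semidefinite matrices of trace 1 (density matrices), and let r ≤ n be a positive integer. Suppose rank(σ) ≤ r and ‖σ − σ̂‖₁ ≤ η for some η > 0. Let σ̂ = Σᵢ λᵢ vᵢvᵢᴴ be a spectral decomposition of σ̂ with eigenvalues λ₁ ≥ λ₂ ≥ … ≥ λₙ ≥ 0 and orthonormal eigenvectors vᵢ, and let Π_W be the orthogonal projection onto W = span{v₁,…,v_r}. Then Tr[(I − Π_W)σ] ≤ 2η. -/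
/-!
Let `Q` be the projection onto the span of the eigenvectors `v j`, `j ≥ r`, of `σ̂`. Then
`Tr[Qσ] = Tr[Q(σ - σ̂)] + ∑_{j ≥ r} λ_j`, and the first term is at most `‖σ - σ̂‖₁` because `Q` is
a projection. For the tail sum let `P` be the projection onto `ker σ`, of dimension at least
`n - r`. The weights `m_j = ⟨v_j, P v_j⟩` lie in `[0, 1]` and add up to `Tr P ≥ n - r`, so, the
`λ_j` being nonnegative and decreasing, `∑_{j ≥ r} λ_j ≤ ∑_j λ_j m_j = Tr[Pσ̂] = -Tr[P(σ - σ̂)]`,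
which is again at most `‖σ - σ̂‖₁` since `Pσ = 0`. Both trace bounds come from the spectral
decomposition of the Hermitian matrix `σ - σ̂`, whose trace norm is the sum of the absolute values
of its eigenvalues.
-/

open scoped ComplexOrder
/-- The trace norm of a complex matrix: the trace of the positive semidefinite
square root of `Aᴴ * A`. -/
noncomputable def traceNorm {n : ℕ} (A : Matrix (Fin n) (Fin n) ℂ) : ℝ :=
  (((Matrix.posSemidef_conjTranspose_mul_self A).1.eigenvectorUnitary : Matrix (Fin n) (Fin n) ℂ) *
      Matrix.diagonal (((↑) : ℝ → ℂ) ∘ (√·) ∘ (Matrix.posSemidef_conjTranspose_mul_self A).1.eigenvalues) *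
      (star (Matrix.posSemidef_conjTranspose_mul_self A).1.eigenvectorUnitary :
        Matrix (Fin n) (Fin n) ℂ)).trace.re

open Matrix Finset

namespace Matrix

variable {m ι : Type*} [Fintype m]

noncomputable def spanProj (u : ι → m → ℂ) (s : Finset ι) : Matrix m m ℂ :=
  ∑ i ∈ s, vecMulVec (u i) (star (u i))

lemma trace_mul_vecMulVec_star (P : Matrix m m ℂ) (x : m → ℂ) :
    (P * vecMulVec x (star x)).trace = star x ⬝ᵥ (P *ᵥ x) := by
  rw [mul_vecMulVec, trace_vecMulVec, dotProduct_comm]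

lemma trace_mul_spanProj (P : Matrix m m ℂ) (u : ι → m → ℂ) (s : Finset ι) :
    (P * spanProj u s).trace = ∑ j ∈ s, star (u j) ⬝ᵥ (P *ᵥ u j) := by
  simp only [spanProj, Finset.mul_sum, trace_sum, trace_mul_vecMulVec_star]

lemma trace_mul_sum_smul_vecMulVec [Fintype ι] (P : Matrix m m ℂ) (μ : ι → ℝ)
    (u : ι → m → ℂ) :
    (P * ∑ j, (μ j : ℂ) • vecMulVec (u j) (star (u j))).trace
      = ∑ j, (μ j : ℂ) * (star (u j) ⬝ᵥ (P *ᵥ u j)) := by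
  simp only [Finset.mul_sum, Matrix.mul_smul, trace_sum, trace_smul, trace_mul_vecMulVec_star,
    smul_eq_mul]

lemma star_dotProduct_spanProj_mulVec (u : ι → m → ℂ) (s : Finset ι) (x : m → ℂ) :
    star x ⬝ᵥ (spanProj u s *ᵥ x) = ((∑ i ∈ s, Complex.normSq (star (u i) ⬝ᵥ x) : ℝ) : ℂ) := by
  simp only [spanProj, sum_mulVec, dotProduct_sum, vecMulVec_mulVec, Complex.ofReal_sum]
  refine Finset.sum_congr rfl fun i _ => ?_
  rw [op_smul_eq_smul, dotProduct_smul, smul_eq_mul, star_dotProduct x,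
    Complex.star_def, Complex.mul_conj]

section Orthonormal

variable [DecidableEq ι] {u : ι → m → ℂ}

lemma spanProj_mulVec (hu : ∀ i j, star (u i) ⬝ᵥ u j = if i = j then 1 else 0)
    (s : Finset ι) (j : ι) : spanProj u s *ᵥ u j = if j ∈ s then u j else 0 := by
  simp [spanProj, sum_mulVec, vecMulVec_mulVec, hu]

lemma spanProj_mul_sum_smul_vecMulVec [Fintype ι]
    (hu : ∀ i j, star (u i) ⬝ᵥ u j = if i = j then 1 else 0) (s : Finset ι) (μ : ι → ℝ) :
    spanProj u s * ∑ j, (μ j : ℂ) • vecMulVec (u j) (star (u j))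
      = ∑ j ∈ s, (μ j : ℂ) • vecMulVec (u j) (star (u j)) := by
  rw [Finset.mul_sum]
  conv_rhs => rw [← Finset.univ_inter s, ← Finset.sum_ite_mem]
  refine Finset.sum_congr rfl fun j _ => ?_
  split_ifs with hj <;> simp [Matrix.mul_smul, mul_vecMulVec, spanProj_mulVec hu, hj]

lemma re_trace_sum_smul_vecMulVec (hu : ∀ i j, star (u i) ⬝ᵥ u j = if i = j then 1 else 0)
    (s : Finset ι) (μ : ι → ℝ) :
    (∑ j ∈ s, (μ j : ℂ) • vecMulVec (u j) (star (u j))).trace.re = ∑ j ∈ s, μ j := by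
  simp [trace_sum, dotProduct_comm (u _), hu]

end Orthonormal

lemma re_star_dotProduct_spanProj_mulVec_nonneg (u : ι → m → ℂ) (s : Finset ι) (x : m → ℂ) :
    0 ≤ (star x ⬝ᵥ (spanProj u s *ᵥ x)).re := by
  rw [star_dotProduct_spanProj_mulVec, Complex.ofReal_re]
  exact Finset.sum_nonneg fun i _ => Complex.normSq_nonneg _

section Square

variable [DecidableEq m] {u : m → m → ℂ}

lemma spanProj_univ (hu : ∀ i j, star (u i) ⬝ᵥ u j = if i = j then 1 else 0) :
    spanProj u Finset.univ = 1 := by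
  have h : (of u)ᵀᴴ * (of u)ᵀ = 1 := by
    ext i j
    simpa [mul_apply, one_apply, dotProduct] using hu i j
  rw [← mul_eq_one_comm.mp h]
  ext k l
  simp [spanProj, sum_apply, mul_apply, vecMulVec_apply]

lemma one_sub_spanProj (hu : ∀ i j, star (u i) ⬝ᵥ u j = if i = j then 1 else 0)
    (s : Finset m) : 1 - spanProj u s = spanProj u sᶜ := by
  rw [← spanProj_univ hu, sub_eq_iff_eq_add, spanProj, spanProj, spanProj,
    Finset.sum_compl_add_sum]

lemma re_star_dotProduct_spanProj_mulVec_le_one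
    (hu : ∀ i j, star (u i) ⬝ᵥ u j = if i = j then 1 else 0) (s : Finset m) {x : m → ℂ}
    (hx : star x ⬝ᵥ x = 1) : (star x ⬝ᵥ (spanProj u s *ᵥ x)).re ≤ 1 := by
  have hbessel : (star x ⬝ᵥ (spanProj u s *ᵥ x)).re
      ≤ (star x ⬝ᵥ (spanProj u univ *ᵥ x)).re := by
    simp only [star_dotProduct_spanProj_mulVec, Complex.ofReal_re]
    exact sum_le_sum_of_subset_of_nonneg s.subset_univ fun i _ _ => Complex.normSq_nonneg _
  simpa [spanProj_univ hu, hx] using hbessel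

end Square

end Matrix

namespace Matrix.IsHermitian

variable {m 𝕜 : Type*} [Fintype m] [DecidableEq m] [RCLike 𝕜] {A : Matrix m m 𝕜}

lemma star_eigenvectorBasis_dotProduct (hA : A.IsHermitian) (i j : m) :
    star ⇑(hA.eigenvectorBasis i) ⬝ᵥ ⇑(hA.eigenvectorBasis j) = if i = j then 1 else 0 := by
  rw [dotProduct_comm, ← EuclideanSpace.inner_eq_star_dotProduct]
  exact orthonormal_iff_ite.mp hA.eigenvectorBasis.orthonormal i j

lemma eq_sum_eigenvalues_smul_vecMulVec (hA : A.IsHermitian) :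
    A = ∑ j, (hA.eigenvalues j : 𝕜) •
      vecMulVec ⇑(hA.eigenvectorBasis j) (star ⇑(hA.eigenvectorBasis j)) := by
  conv_lhs => rw [hA.spectral_theorem]
  ext k l
  simp [mul_apply, diagonal_apply, sum_apply, vecMulVec_apply, eigenvectorUnitary_apply,
    RCLike.real_smul_eq_coe_mul]
  exact Finset.sum_congr rfl fun j _ => by ring

lemma trace_cfc (hA : A.IsHermitian) (f : ℝ → ℝ) :
    (cfc f A).trace = ∑ i, (f (hA.eigenvalues i) : 𝕜) := by
  rw [hA.cfc_eq, IsHermitian.cfc, Unitary.conjStarAlgAut_apply, trace_mul_cycle,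
    Unitary.coe_star_mul_self, one_mul, trace_diagonal]
  rfl

end Matrix.IsHermitian

lemma traceNorm_eq_re_trace_cfc_sqrt {n : ℕ} (A : Matrix (Fin n) (Fin n) ℂ) :
    traceNorm A = (cfc Real.sqrt (Aᴴ * A)).trace.re := by
  rw [(posSemidef_conjTranspose_mul_self A).1.cfc_eq, IsHermitian.cfc,
    Unitary.conjStarAlgAut_apply]
  rfl

lemma Matrix.IsHermitian.traceNorm_eq_sum_abs_eigenvalues {n : ℕ}
    {A : Matrix (Fin n) (Fin n) ℂ} (hA : A.IsHermitian) :
    traceNorm A = ∑ i, |hA.eigenvalues i| := by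
  have hsqrt : cfc Real.sqrt (Aᴴ * A) = cfc (fun x : ℝ => |x|) A := by
    rw [hA.eq, ← sq, ← cfc_comp_pow Real.sqrt 2 A]
    simp_rw [Real.sqrt_sq_eq_abs]
  rw [traceNorm_eq_re_trace_cfc_sqrt, hsqrt, hA.trace_cfc]
  simp [Complex.re_sum]

lemma Matrix.IsHermitian.abs_re_trace_spanProj_mul_le_traceNorm {n : ℕ}
    {A : Matrix (Fin n) (Fin n) ℂ} (hA : A.IsHermitian) {w : Fin n → Fin n → ℂ}
    (hw : ∀ i j, star (w i) ⬝ᵥ w j = if i = j then 1 else 0) (s : Finset (Fin n)) :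
    |(spanProj w s * A).trace.re| ≤ traceNorm A := by
  let u : Fin n → Fin n → ℂ := fun j => hA.eigenvectorBasis j
  let q := fun j => (star (u j) ⬝ᵥ (spanProj w s *ᵥ u j)).re
  have hq : ∀ j, q j ∈ Set.Icc 0 1 := fun j =>
    ⟨re_star_dotProduct_spanProj_mulVec_nonneg w s (u j),
      re_star_dotProduct_spanProj_mulVec_le_one hw s
        (by simpa using hA.star_eigenvectorBasis_dotProduct j j)⟩
  have htrace : (spanProj w s * A).trace.re = ∑ j, hA.eigenvalues j * q j := by
    have h : (spanProj w s * A).trace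
        = ∑ j, (hA.eigenvalues j : ℂ) * (star (u j) ⬝ᵥ (spanProj w s *ᵥ u j)) := by
      conv_lhs => rw [hA.eq_sum_eigenvalues_smul_vecMulVec]
      exact trace_mul_sum_smul_vecMulVec _ _ u
    simp [h, Complex.re_sum, q]
  rw [htrace, hA.traceNorm_eq_sum_abs_eigenvalues]
  refine (Finset.abs_sum_le_sum_abs _ _).trans (Finset.sum_le_sum fun j _ => ?_)
  rw [abs_mul, abs_of_nonneg (hq j).1]
  exact mul_le_of_le_one_right (abs_nonneg _) (hq j).2

lemma Finset.sum_compl_le_sum_mul_of_threshold {ι : Type*} [Fintype ι] [DecidableEq ι]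
    {s : Finset ι} {lam m : ι → ℝ} {c : ℝ} (hc : 0 ≤ c) (hs : ∀ j ∈ s, c ≤ lam j)
    (hsc : ∀ j ∉ s, lam j ≤ c) (hm0 : ∀ j, 0 ≤ m j) (hm1 : ∀ j, m j ≤ 1)
    (hsum : (#sᶜ : ℝ) ≤ ∑ j, m j) :
    ∑ j ∈ sᶜ, lam j ≤ ∑ j, lam j * m j := by
  have hterm : ∀ j, c * (m j - if j ∈ sᶜ then 1 else 0)
      ≤ lam j * m j - if j ∈ sᶜ then lam j else 0 := by
    intro j
    by_cases hj : j ∈ s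
    · simp only [mem_compl, hj, not_true_eq_false, if_false, sub_zero]
      exact mul_le_mul_of_nonneg_right (hs j hj) (hm0 j)
    · simp only [mem_compl, hj, not_false_eq_true, if_true]
      nlinarith [hsc j hj, hm1 j]
  have hsum_terms := Finset.sum_le_sum fun j (_ : j ∈ univ) => hterm j
  simp only [← Finset.mul_sum, Finset.sum_sub_distrib, Finset.sum_ite_mem,
    univ_inter, Finset.sum_const, nsmul_eq_mul, mul_one] at hsum_terms
  nlinarith [mul_nonneg hc (sub_nonneg.2 hsum)]

lemma Fin.sum_compl_filter_lt_le_sum_mul {n r : ℕ} {lam m : Fin n → ℝ}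
    (hdec : ∀ i j : Fin n, i ≤ j → lam j ≤ lam i) (hnonneg : ∀ i, 0 ≤ lam i)
    (hm0 : ∀ j, 0 ≤ m j) (hm1 : ∀ j, m j ≤ 1) (hsum : ((n - r : ℕ) : ℝ) ≤ ∑ j, m j) :
    ∑ j ∈ (univ.filter fun j : Fin n => (j : ℕ) < r)ᶜ, lam j ≤ ∑ j, lam j * m j := by
  set s := univ.filter fun j : Fin n => (j : ℕ) < r
  obtain ⟨c, hc, hs, hsc⟩ : ∃ c, 0 ≤ c ∧ (∀ j ∈ s, c ≤ lam j) ∧ ∀ j ∉ s, lam j ≤ c := by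
    rcases lt_or_ge r n with hrn | hnr
    · refine ⟨lam ⟨r, hrn⟩, hnonneg _, fun j hj => hdec _ _ ?_, fun j hj => hdec _ _ ?_⟩
      · simp only [s, mem_filter, mem_univ, true_and] at hj
        exact Fin.le_def.2 hj.le
      · simp only [s, mem_filter, mem_univ, true_and, not_lt] at hj
        exact Fin.le_def.2 hj
    · refine ⟨0, le_rfl, fun j _ => hnonneg j, fun j hj => absurd ?_ hj⟩
      simp only [s, mem_filter, mem_univ, true_and]
      omega
  refine sum_compl_le_sum_mul_of_threshold hc hs hsc hm0 hm1 ?_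
  have hcard : n - min n r = n - r := by omega
  rwa [card_compl, Fintype.card_fin, Fin.card_filter_val_lt, hcard]

lemma sum_compl_filter_lt_le_traceNorm_sub {n r : ℕ} {σ σhat : Matrix (Fin n) (Fin n) ℂ}
    (hσ : σ.IsHermitian) (hσhat : σhat.IsHermitian) (hrank : σ.rank ≤ r)
    {lam : Fin n → ℝ} {v : Fin n → Fin n → ℂ}
    (horth : ∀ i j, star (v i) ⬝ᵥ v j = if i = j then 1 else 0)
    (hdec : ∀ i j : Fin n, i ≤ j → lam j ≤ lam i) (hnonneg : ∀ i, 0 ≤ lam i)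
    (hspec : σhat = ∑ i, (lam i : ℂ) • vecMulVec (v i) (star (v i))) :
    ∑ j ∈ (univ.filter fun j : Fin n => (j : ℕ) < r)ᶜ, lam j ≤ traceNorm (σ - σhat) := by
  let u : Fin n → Fin n → ℂ := fun j => hσ.eigenvectorBasis j
  have hu : ∀ i j, star (u i) ⬝ᵥ u j = if i = j then 1 else 0 :=
    hσ.star_eigenvectorBasis_dotProduct
  let K := univ.filter fun j => hσ.eigenvalues j = 0
  have hKσ : spanProj u K * σ = 0 := by
    conv_lhs => rw [hσ.eq_sum_eigenvalues_smul_vecMulVec]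
    refine (spanProj_mul_sum_smul_vecMulVec hu K _).trans (sum_eq_zero fun j hj => ?_)
    simp [(mem_filter.1 hj).2]
  let m j := (star (v j) ⬝ᵥ (spanProj u K *ᵥ v j)).re
  have hmsum : ∑ j, m j = #K := by
    have hsum_eq_trace := trace_mul_spanProj (spanProj u K) v univ
    rw [spanProj_univ horth, mul_one] at hsum_eq_trace
    have htrace_eq_card := trace_mul_spanProj 1 u K
    rw [one_mul] at htrace_eq_card
    simp [m, ← Complex.re_sum, ← hsum_eq_trace, htrace_eq_card, hu]
  have hcard : n - r ≤ #K := by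
    have hrankK : σ.rank = #Kᶜ := by
      rw [hσ.rank_eq_card_non_zero_eigs, Fintype.card_subtype]
      simp [K, filter_not]
    rw [hrankK, card_compl, Fintype.card_fin] at hrank
    omega
  have hweighted : ∑ j, lam j * m j = -(spanProj u K * (σ - σhat)).trace.re := by
    rw [Matrix.mul_sub, hKσ, zero_sub, trace_neg, Complex.neg_re, neg_neg, hspec,
      trace_mul_sum_smul_vecMulVec]
    simp [Complex.re_sum, m]
  have hvunit : ∀ j, star (v j) ⬝ᵥ v j = 1 := fun j => by simpa using horth j j
  calc ∑ j ∈ (univ.filter fun j : Fin n => (j : ℕ) < r)ᶜ, lam j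
      ≤ ∑ j, lam j * m j :=
        Fin.sum_compl_filter_lt_le_sum_mul hdec hnonneg
          (fun j => re_star_dotProduct_spanProj_mulVec_nonneg u K (v j))
          (fun j => re_star_dotProduct_spanProj_mulVec_le_one hu K (hvunit j))
          (by rw [hmsum]; exact_mod_cast hcard)
    _ = -(spanProj u K * (σ - σhat)).trace.re := hweighted
    _ ≤ traceNorm (σ - σhat) :=
        (neg_le_abs _).trans ((hσ.sub hσhat).abs_re_trace_spanProj_mul_le_traceNorm hu K)

theorem stmt0_general {n r : ℕ}
    (σ σhat : Matrix (Fin n) (Fin n) ℂ)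
    (hσ : σ.PosSemidef)
    (hσhat : σhat.PosSemidef)
    (hrank : σ.rank ≤ r)
    (η : ℝ) (hdist : traceNorm (σ - σhat) ≤ η)
    (lam : Fin n → ℝ) (v : Fin n → Fin n → ℂ)
    (horth : ∀ i j, dotProduct (star (v i)) (v j) = if i = j then 1 else 0)
    (hdec : ∀ i j : Fin n, i ≤ j → lam j ≤ lam i)
    (hnonneg : ∀ i, 0 ≤ lam i)
    (hspec : σhat = ∑ i, (lam i : ℂ) • Matrix.vecMulVec (v i) (star (v i))) :
    (((1 : Matrix (Fin n) (Fin n) ℂ)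
        - ∑ i ∈ Finset.univ.filter (fun i : Fin n => (i : ℕ) < r),
            Matrix.vecMulVec (v i) (star (v i))) * σ).trace.re ≤ 2 * η := by
  set s := univ.filter fun i : Fin n => (i : ℕ) < r
  change ((1 - spanProj v s) * σ).trace.re ≤ 2 * η
  have hsplit : spanProj v sᶜ * σ = spanProj v sᶜ * (σ - σhat) + spanProj v sᶜ * σhat := by
    rw [← Matrix.mul_add, sub_add_cancel]
  have htail : (spanProj v sᶜ * σhat).trace.re = ∑ j ∈ sᶜ, lam j := by
    rw [hspec, spanProj_mul_sum_smul_vecMulVec horth, re_trace_sum_smul_vecMulVec horth]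
  calc ((1 - spanProj v s) * σ).trace.re
      = (spanProj v sᶜ * (σ - σhat)).trace.re + ∑ j ∈ sᶜ, lam j := by
        rw [one_sub_spanProj horth, hsplit, trace_add, Complex.add_re, htail]
    _ ≤ traceNorm (σ - σhat) + traceNorm (σ - σhat) := by
        gcongr
        · exact (le_abs_self _).trans
            ((hσ.1.sub hσhat.1).abs_re_trace_spanProj_mul_le_traceNorm horth sᶜ)
        · exact sum_compl_filter_lt_le_traceNorm_sub hσ.1 hσhat.1 hrank horth hdec hnonneg hspec
    _ ≤ 2 * η := by linarith

theorem stmt0 {n r : ℕ} (hr : 0 < r) (hrn : r ≤ n)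
    (σ σhat : Matrix (Fin n) (Fin n) ℂ)
    (hσ : σ.PosSemidef) (hσtr : σ.trace = 1)
    (hσhat : σhat.PosSemidef) (hσhattr : σhat.trace = 1)
    (hrank : σ.rank ≤ r)
    (η : ℝ) (hη : 0 < η) (hdist : traceNorm (σ - σhat) ≤ η)
    (lam : Fin n → ℝ) (v : Fin n → Fin n → ℂ)
    (horth : ∀ i j, dotProduct (star (v i)) (v j) = if i = j then 1 else 0)
    (hdec : ∀ i j : Fin n, i ≤ j → lam j ≤ lam i)
    (hnonneg : ∀ i, 0 ≤ lam i)
    (hspec : σhat = ∑ i, (lam i : ℂ) • Matrix.vecMulVec (v i) (star (v i))) :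
    (((1 : Matrix (Fin n) (Fin n) ℂ)
        - ∑ i ∈ Finset.univ.filter (fun i : Fin n => (i : ℕ) < r),
            Matrix.vecMulVec (v i) (star (v i))) * σ).trace.re ≤ 2 * η :=
  stmt0_general σ σhat hσ hσhat hrank η hdist lam v horth hdec hnonneg hspec
end

section
/- Let d > 1 be a real number. For each positive integer p define the interval I_p = (p·d^{p−1}, p·d^{p}] ⊆ ℝ. Then for any two distinct positive integers p ≠ q, the intervals I_p and I_q are disjoint. -/
lemma stmt14_key (d : ℝ) (hd : 1 < d) (p q : ℕ) (hpq : p < q) :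
    (p : ℝ) * d ^ p ≤ (q : ℝ) * d ^ (q - 1) := by
  have hd0 : (0:ℝ) ≤ d := by linarith
  have h1 : d ^ p ≤ d ^ (q - 1) := pow_le_pow_right₀ hd.le (by omega)
  have h2 : (p : ℝ) ≤ (q : ℝ) := by exact_mod_cast hpq.le
  exact mul_le_mul h2 h1 (pow_nonneg hd0 _) (by positivity)

theorem stmt14 (d : ℝ) (hd : 1 < d) (p q : ℕ) (hp : 0 < p) (hq : 0 < q)
    (hpq : p ≠ q) :
    Disjoint (Set.Ioc ((p : ℝ) * d ^ (p - 1)) ((p : ℝ) * d ^ p))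
      (Set.Ioc ((q : ℝ) * d ^ (q - 1)) ((q : ℝ) * d ^ q)) := by
  rcases hpq.lt_or_gt with h | h
  · have := stmt14_key d hd p q h
    rw [Set.disjoint_left]
    rintro x ⟨_, hx2⟩ ⟨hx3, _⟩
    linarith
  · have := stmt14_key d hd q p h
    rw [Set.disjoint_left]
    rintro x ⟨hx1, _⟩ ⟨_, hx4⟩
    linarith
end

section
/- Let d > 1 and B > 0 be real numbers, and let a > 0 be the (unique) positive real satisfying a·d^{a} = B. Then B ≤ ⌈a⌉·d^{⌈a⌉} always holds, and the equation p = ⌈log_d(B/p)⌉ has a positive-integer solution if and only if ⌈a⌉·d^{⌈a⌉−1} < B, in which case p = ⌈a⌉ is its unique solution. -/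
theorem stmt18 (d B : ℝ) (hd : 1 < d) (hB : 0 < B) (a : ℝ) (ha0 : 0 < a)
    (ha : a * d ^ a = B) :
    B ≤ (⌈a⌉ : ℝ) * d ^ (⌈a⌉ : ℤ) ∧
      ((∃ p : ℕ, 0 < p ∧ (p : ℤ) = ⌈Real.logb d (B / p)⌉) ↔
        (⌈a⌉ : ℝ) * d ^ (⌈a⌉ - 1) < B) ∧
      (∀ p : ℕ, 0 < p → (p : ℤ) = ⌈Real.logb d (B / p)⌉ → (p : ℤ) = ⌈a⌉) := by
  have hd0 : (0:ℝ) < d := lt_trans one_pos hd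
  -- strict monotonicity of x ↦ x * d ^ x
  have mono : ∀ x y : ℝ, 0 < x → x < y → x * d ^ x < y * d ^ y := by
    intro x y hx hxy
    have h1 : d ^ x < d ^ y := (Real.rpow_lt_rpow_left_iff hd).mpr hxy
    have h2 : (0:ℝ) < d ^ x := Real.rpow_pos_of_pos hd0 x
    nlinarith
  have mono' : ∀ x y : ℝ, 0 < x → 0 < y → x * d ^ x ≤ y * d ^ y → x ≤ y := by
    intro x y hx hy h
    by_contra hc
    push_neg at hc
    exact absurd h (not_le.mpr (mono y x hy hc))
  have hnle : a ≤ (⌈a⌉:ℝ) := Int.le_ceil a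
  have hnZ : (0:ℤ) < ⌈a⌉ := Int.ceil_pos.mpr ha0
  have hnpos : (0:ℝ) < (⌈a⌉:ℝ) := by exact_mod_cast hnZ
  -- B ≤ n d^n in rpow form
  have hBle : B ≤ (⌈a⌉:ℝ) * d ^ ((⌈a⌉:ℤ):ℝ) := by
    rcases eq_or_lt_of_le hnle with h | h
    · rw [← ha, ← h]
    · exact le_of_lt (ha ▸ mono a _ ha0 h)
  have cast1 : d ^ ((⌈a⌉:ℤ):ℝ) = d ^ (⌈a⌉:ℤ) := Real.rpow_intCast d _
  -- characterization of solutions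
  have char : ∀ p : ℕ, 0 < p →
      ((p : ℤ) = ⌈Real.logb d (B / p)⌉ ↔
        (p:ℝ) * d ^ ((p:ℝ) - 1) < B ∧ B ≤ (p:ℝ) * d ^ (p:ℝ)) := by
    intro p hp
    have hppos : (0:ℝ) < p := by exact_mod_cast hp
    have hBp : 0 < B / p := div_pos hB hppos
    rw [eq_comm, Int.ceil_eq_iff]
    constructor
    · rintro ⟨h1, h2⟩
      have h1' : d ^ (((p:ℤ):ℝ) - 1) < B / p :=
        (Real.lt_logb_iff_rpow_lt hd hBp).mp h1
      have h2' : B / p ≤ d ^ (((p:ℤ):ℝ)) :=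
        (Real.logb_le_iff_le_rpow hd hBp).mp h2
      push_cast at h1' h2'
      constructor
      · calc (p:ℝ) * d ^ ((p:ℝ) - 1) < (p:ℝ) * (B / p) := by
              exact mul_lt_mul_of_pos_left h1' hppos
          _ = B := by field_simp
      · calc B = (p:ℝ) * (B / p) := by field_simp
          _ ≤ (p:ℝ) * d ^ ((p:ℝ)) := mul_le_mul_of_nonneg_left h2' hppos.le
    · rintro ⟨h1, h2⟩
      constructor
      · rw [Real.lt_logb_iff_rpow_lt hd hBp, lt_div_iff₀ hppos]
        push_cast
        linarith [h1]
      · rw [Real.logb_le_iff_le_rpow hd hBp, div_le_iff₀ hppos]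
        push_cast
        linarith [h2]
  -- uniqueness: any solution equals ⌈a⌉
  have uniq : ∀ p : ℕ, 0 < p → (p : ℤ) = ⌈Real.logb d (B / p)⌉ → (p : ℤ) = ⌈a⌉ := by
    intro p hp hsol
    obtain ⟨h1, h2⟩ := (char p hp).mp hsol
    have hppos : (0:ℝ) < p := by exact_mod_cast hp
    -- a ≤ p
    have hale : a ≤ (p:ℝ) := by
      apply mono' a p ha0 hppos
      rw [ha]
      exact h2
    -- p - 1 < a
    have hlt : (p:ℝ) - 1 < a := by
      by_contra hc
      push_neg at hc
      have hfa : a * d ^ a ≤ ((p:ℝ)-1) * d ^ ((p:ℝ)-1) := by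
        rcases eq_or_lt_of_le hc with h | h
        · rw [← h]
        · exact (mono a _ ha0 h).le
      have hdp : (0:ℝ) < d ^ ((p:ℝ)-1) := Real.rpow_pos_of_pos hd0 _
      rw [ha] at hfa
      nlinarith [h1]
    symm
    rw [Int.ceil_eq_iff]
    push_cast
    exact ⟨hlt, hale⟩
  refine ⟨by rwa [cast1] at hBle, ?_, uniq⟩
  constructor
  · rintro ⟨p, hp, hsol⟩
    have hpeq := uniq p hp hsol
    obtain ⟨h1, _⟩ := (char p hp).mp hsol
    have : (p:ℝ) = ((⌈a⌉:ℤ):ℝ) := by exact_mod_cast hpeq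
    rw [this] at h1
    have : d ^ (((⌈a⌉:ℤ):ℝ) - 1) = d ^ (⌈a⌉ - 1 : ℤ) := by
      rw [← Real.rpow_intCast d (⌈a⌉ - 1)]
      push_cast
      ring_nf
    rwa [this] at h1
  · intro hlt
    refine ⟨⌈a⌉.toNat, ?_, ?_⟩
    · omega
    have hcast : ((⌈a⌉.toNat : ℕ) : ℝ) = ((⌈a⌉:ℤ):ℝ) := by
      exact_mod_cast congrArg (Int.cast : ℤ → ℝ) (Int.toNat_of_nonneg hnZ.le)
    have hp : 0 < ⌈a⌉.toNat := by omega
    have hZ : ((⌈a⌉.toNat : ℕ) : ℤ) = ⌈a⌉ := Int.toNat_of_nonneg hnZ.le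
    rw [hZ]
    have := (char ⌈a⌉.toNat hp).mpr ?_
    · rw [← hZ]; exact this
    constructor
    · rw [hcast]
      have : d ^ (((⌈a⌉:ℤ):ℝ) - 1) = d ^ (⌈a⌉ - 1 : ℤ) := by
        rw [← Real.rpow_intCast d (⌈a⌉ - 1)]; push_cast; ring_nf
      rw [this]; exact hlt
    · rw [hcast, Real.rpow_intCast]; rwa [cast1] at hBle
end
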